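/- (Proposition 6) In Game 2, the trading game with order information protection, the buyer never verifies at equilibrium: if C_T > 0, then at every pure Nash equilibrium of Game 2 in which the buyer orders some model r ∈ {1,…,N}, the buyer's verification decision is NV. Equivalently, no strategy profile in which the buyer plays (r, V, θ) for some r ∈ {1,…,N} and θ ∈ {0,…,T+1} is a pure Nash equilibrium, because either deviating to (r, NV) (when U_{s(r)} − p_r ≥ 0) or deviating to not ordering (when U_{s(r)} − p_r < 0) strictly increases the buyer's payoff. -/
import Mathlib


/-- The acceptance probability `δ(θ, α)` of a model of quality `α` under verification with
test data size `T` and acceptance criterion `θ`. -/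
noncomputable def delta (T θ : ℕ) (α : ℝ) : ℝ :=
  ∑ i ∈ Finset.Icc θ T, (T.choose i : ℝ) * α ^ i * (1 - α) ^ (T - i)

/-- Buyer's payoff in Game 2 (trading with order information protection): the seller,
not observing the order, chooses a delivery map `smap`; the buyer chooses an order `r`
(`r = 0` means no purchase) and a verification decision (`none` = NV, `some θ` = V with
criterion `θ`). -/
noncomputable def buyerPayoff2 (T : ℕ) (α U p : ℕ → ℝ) (CT : ℝ)
    (smap : ℕ → ℕ) (r : ℕ) (b : Option ℕ) : ℝ :=
  if r = 0 then 0
  else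
    match b with
    | none => U (smap r) - p r
    | some θ => delta T θ (α (smap r)) * (U (smap r) - p r) - CT

/-- Seller's payoff in Game 2 (trading with order information protection). -/
noncomputable def sellerPayoff2 (T : ℕ) (α C p : ℕ → ℝ)
    (smap : ℕ → ℕ) (r : ℕ) (b : Option ℕ) : ℝ :=
  if r = 0 then 0
  else
    match b with
    | none => p r - C (smap r)
    | some θ => delta T θ (α (smap r)) * (p r - C (smap r))

/-- Pure Nash equilibrium of Game 2: the seller's delivery map `smap : {1,…,N} → {1,…,N}`
and the buyer's order `r ∈ {0,1,…,N}` with verification decision `b` are mutual best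
responses (no unilateral deviation strictly improves a player's payoff). -/
def IsPNE2 (N T : ℕ) (α U C p : ℕ → ℝ) (CT : ℝ)
    (smap : ℕ → ℕ) (r : ℕ) (b : Option ℕ) : Prop :=
  (∀ n ∈ Finset.Icc 1 N, smap n ∈ Finset.Icc 1 N) ∧ r ≤ N ∧ (∀ θ ∈ b, θ ≤ T + 1) ∧
  (∀ smap' : ℕ → ℕ, (∀ n ∈ Finset.Icc 1 N, smap' n ∈ Finset.Icc 1 N) →
    sellerPayoff2 T α C p smap' r b ≤ sellerPayoff2 T α C p smap r b) ∧
  (∀ r' ≤ N, ∀ b' : Option ℕ, (∀ θ ∈ b', θ ≤ T + 1) →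
    buyerPayoff2 T α U p CT smap r' b' ≤ buyerPayoff2 T α U p CT smap r b)


lemma delta_nonneg (T θ : ℕ) (α : ℝ) (h0 : 0 ≤ α) (h1 : α ≤ 1) :
    0 ≤ delta T θ α := by
  apply Finset.sum_nonneg
  intro i _
  have : (0:ℝ) ≤ 1 - α := by linarith
  positivity

lemma delta_le_one (T θ : ℕ) (α : ℝ) (h0 : 0 ≤ α) (h1 : α ≤ 1) :
    delta T θ α ≤ 1 := by
  have h1a : (0:ℝ) ≤ 1 - α := by linarith
  have key : delta T θ α ≤ ∑ i ∈ Finset.range (T+1), (T.choose i : ℝ) * α ^ i * (1 - α) ^ (T - i) := by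
    apply Finset.sum_le_sum_of_subset_of_nonneg
    · intro i hi
      simp only [Finset.mem_Icc, Finset.mem_range] at hi ⊢
      omega
    · intro i _ _
      positivity
  have binom : ∑ i ∈ Finset.range (T+1), (T.choose i : ℝ) * α ^ i * (1 - α) ^ (T - i) = 1 := by
    calc ∑ i ∈ Finset.range (T+1), (T.choose i : ℝ) * α ^ i * (1 - α) ^ (T - i)
        = ∑ i ∈ Finset.range (T+1), α ^ i * (1 - α) ^ (T - i) * (T.choose i : ℝ) := by
          apply Finset.sum_congr rfl; intro i _; ring
      _ = (α + (1 - α)) ^ T := (add_pow α (1 - α) T).symm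
      _ = 1 := by ring_nf
  linarith [key, binom ▸ key]

/-- Proposition 6: in Game 2 (trading with order information protection), if `CT > 0`
then at every pure Nash equilibrium in which the buyer orders some model
`r ∈ {1,…,N}`, the buyer's verification decision is NV. -/
theorem prop6 (N T : ℕ) (hN : 1 ≤ N) (hT : 1 ≤ T)
    (α U C p : ℕ → ℝ) (CT : ℝ)
    (hα0 : 0 ≤ α 1) (hα1 : α N ≤ 1) (hαmono : MonotoneOn α (Set.Icc 1 N))
    (hU0 : 0 ≤ U 1) (hUmono : MonotoneOn U (Set.Icc 1 N))
    (hC0 : 0 < C 1) (hCmono : StrictMonoOn C (Set.Icc 1 N))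
    (hp0 : 0 ≤ p 1) (hpmono : MonotoneOn p (Set.Icc 1 N))
    (hCT : 0 < CT) :
    ∀ smap r b, IsPNE2 N T α U C p CT smap r b → 1 ≤ r → b = none := by
  intro smap r b hPNE hr
  obtain ⟨hs, hrN, hb, _, hbuyer⟩ := hPNE
  cases b with
  | none => rfl
  | some θ =>
    exfalso
    have hr0 : r ≠ 0 := by omega
    have hrmem : r ∈ Finset.Icc 1 N := by simp [Finset.mem_Icc]; omega
    have hsr := hs r hrmem
    simp only [Finset.mem_Icc] at hsr
    have h1mem : (1:ℕ) ∈ Set.Icc 1 N := by simp [Set.mem_Icc]; omega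
    have hsrmem : smap r ∈ Set.Icc 1 N := by simp [Set.mem_Icc]; omega
    have hNmem : (N:ℕ) ∈ Set.Icc 1 N := by simp [Set.mem_Icc]; omega
    have hαlo : 0 ≤ α (smap r) := le_trans hα0 (hαmono h1mem hsrmem hsr.1)
    have hαhi : α (smap r) ≤ 1 := le_trans (hαmono hsrmem hNmem hsr.2) hα1
    have hd0 := delta_nonneg T θ (α (smap r)) hαlo hαhi
    have hd1 := delta_le_one T θ (α (smap r)) hαlo hαhi
    have hNV := hbuyer r hrN none (by simp)
    have h0dev := hbuyer 0 (by omega) none (by simp)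
    simp only [buyerPayoff2, hr0, if_neg hr0, if_pos rfl] at hNV h0dev
    norm_num at hNV h0dev
    set x := U (smap r) - p r with hx
    set d := delta T θ (α (smap r)) with hd
    rcases le_or_gt 0 x with hx0 | hx0
    · nlinarith
    · nlinarith
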